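/- arXiv:2509.14039 — 4 statements merged into one kernel-verified Lean document; each statement's English description precedes it below -/
import Mathlib

section
/- Let Φ be a symmetric positive semidefinite d×d real matrix with smallest eigenvalue a > 0 and largest eigenvalue at most c², and let α ∈ (0, 1/c²]. Then for every vector u ∈ ℝ^d and every random vector X with ‖X‖ ≤ c almost surely and E[XXᵀ] = Φ, one has E[‖(I − αXXᵀ)u‖²] ≤ (1 − αa)‖u‖². -/
open MeasureTheory Matrix

noncomputable def vnorm {d : ℕ} (v : Fin d → ℝ) : ℝ := Real.sqrt (∑ i, v i ^ 2)

lemma vnorm_sq {d : ℕ} (v : Fin d → ℝ) : vnorm v ^ 2 = ∑ i, v i ^ 2 :=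
  Real.sq_sqrt (Finset.sum_nonneg fun i _ => sq_nonneg _)

lemma abs_le_vnorm {d : ℕ} (v : Fin d → ℝ) (i : Fin d) : |v i| ≤ vnorm v := by
  rw [← Real.sqrt_sq_eq_abs]
  exact Real.sqrt_le_sqrt
    (Finset.single_le_sum (fun j _ => sq_nonneg (v j)) (Finset.mem_univ i))

/-- If `Φ = E[XXᵀ]` is PSD with smallest eigenvalue `a > 0` and largest
eigenvalue at most `c²`, `‖X‖ ≤ c` a.s., and `0 < α ≤ 1/c²`, then
`E[‖(I − αXXᵀ)u‖²] ≤ (1 − αa)‖u‖²`. -/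
theorem stmt_0 {d : ℕ} (c a α : ℝ) (hc : 0 < c) (ha : 0 < a)
    (hα : 0 < α) (hα' : α ≤ 1 / c ^ 2)
    (Φ : Matrix (Fin d) (Fin d) ℝ) (hΦpsd : Φ.PosSemidef)
    (hmin : ∀ u : Fin d → ℝ, a * vnorm u ^ 2 ≤ u ⬝ᵥ Φ.mulVec u)
    (hmax : ∀ u : Fin d → ℝ, u ⬝ᵥ Φ.mulVec u ≤ c ^ 2 * vnorm u ^ 2)
    {Ω : Type*} [MeasurableSpace Ω] (μ : Measure Ω) [IsProbabilityMeasure μ]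
    (X : Ω → Fin d → ℝ) (hXmeas : Measurable X)
    (hXbdd : ∀ᵐ ω ∂μ, vnorm (X ω) ≤ c)
    (hXΦ : ∀ i j, ∫ ω, X ω i * X ω j ∂μ = Φ i j)
    (u : Fin d → ℝ) :
    ∫ ω, vnorm (((1 : Matrix (Fin d) (Fin d) ℝ)
        - α • vecMulVec (X ω) (X ω)).mulVec u) ^ 2 ∂μ
      ≤ (1 - α * a) * vnorm u ^ 2 := by
  set U : ℝ := ∑ i, u i ^ 2 with hUdef
  have hUeq : vnorm u ^ 2 = U := vnorm_sq u
  have hUnn : 0 ≤ U := Finset.sum_nonneg fun i _ => sq_nonneg _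
  set f : Ω → ℝ := fun ω => vnorm (((1 : Matrix (Fin d) (Fin d) ℝ)
        - α • vecMulVec (X ω) (X ω)).mulVec u) ^ 2 with hfdef
  set S : Ω → ℝ := fun ω => X ω ⬝ᵥ u with hSdef
  -- pointwise algebraic identity
  have key : ∀ ω, f ω = U - 2 * α * S ω ^ 2 + α ^ 2 * S ω ^ 2 * (∑ i, X ω i ^ 2) := by
    intro ω
    have hmv : ∀ i, (((1 : Matrix (Fin d) (Fin d) ℝ)
        - α • vecMulVec (X ω) (X ω)).mulVec u) i = u i - α * X ω i * S ω := by
      intro i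
      have h1 : (vecMulVec (X ω) (X ω) *ᵥ u) i = X ω i * S ω := by
        simp [Matrix.mulVec, Matrix.vecMulVec_apply, dotProduct, Finset.mul_sum,
          mul_assoc, hSdef]
      simp [Matrix.sub_mulVec, Matrix.one_mulVec, Matrix.smul_mulVec, h1, mul_assoc]
    have hdot : S ω = ∑ i, X ω i * u i := rfl
    calc f ω = ∑ i, ((((1 : Matrix (Fin d) (Fin d) ℝ)
            - α • vecMulVec (X ω) (X ω)).mulVec u) i) ^ 2 := vnorm_sq _
      _ = ∑ i, (u i - α * X ω i * S ω) ^ 2 :=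
            Finset.sum_congr rfl fun i _ => by rw [hmv]
      _ = ∑ i, (u i ^ 2 - 2 * α * S ω * (X ω i * u i)
            + α ^ 2 * S ω ^ 2 * X ω i ^ 2) := by
            exact Finset.sum_congr rfl fun i _ => by ring
      _ = U - 2 * α * S ω * (∑ i, X ω i * u i)
            + α ^ 2 * S ω ^ 2 * ∑ i, X ω i ^ 2 := by
            rw [Finset.sum_add_distrib, Finset.sum_sub_distrib, ← Finset.mul_sum,
              ← Finset.mul_sum]
      _ = U - 2 * α * S ω ^ 2 + α ^ 2 * S ω ^ 2 * ∑ i, X ω i ^ 2 := by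
            rw [← hdot]; ring
  -- measurability
  have hXi : ∀ i, Measurable fun ω => X ω i := fun i => (measurable_pi_apply i).comp hXmeas
  have hSmeas : Measurable S := by
    have : S = fun ω => ∑ i, X ω i * u i := rfl
    rw [this]
    exact Finset.measurable_sum _ fun i _ => (hXi i).mul measurable_const
  -- integrability of coordinate products
  have hXij : ∀ i j, Integrable (fun ω => X ω i * X ω j) μ := by
    intro i j
    refine Integrable.mono' (integrable_const (c * c)) ((hXi i).mul (hXi j)).aestronglyMeasurable ?_
    filter_upwards [hXbdd] with ω hω
    rw [Real.norm_eq_abs, abs_mul]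
    exact mul_le_mul ((abs_le_vnorm _ i).trans hω) ((abs_le_vnorm _ j).trans hω)
      (abs_nonneg _) hc.le
  -- S² as a double sum
  have hs2 : ∀ ω, S ω ^ 2 = ∑ i, ∑ j, u i * u j * (X ω i * X ω j) := by
    intro ω
    have hdot : S ω = ∑ i, X ω i * u i := rfl
    rw [hdot, sq, Finset.sum_mul_sum]
    exact Finset.sum_congr rfl fun i _ => Finset.sum_congr rfl fun j _ => by ring
  have hS2int : Integrable (fun ω => S ω ^ 2) μ := by
    have : Integrable (fun ω => ∑ i, ∑ j, u i * u j * (X ω i * X ω j)) μ :=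
      integrable_finset_sum _ fun i _ =>
        integrable_finset_sum _ fun j _ => (hXij i j).const_mul _
    exact this.congr (Filter.Eventually.of_forall fun ω => (hs2 ω).symm)
  -- value of ∫ S²
  have hS2val : ∫ ω, S ω ^ 2 ∂μ = u ⬝ᵥ Φ.mulVec u := by
    have h1 : ∫ ω, S ω ^ 2 ∂μ = ∑ i, ∑ j, u i * u j * Φ i j := by
      rw [integral_congr_ae (Filter.Eventually.of_forall hs2),
        integral_finset_sum _ fun i _ =>
          integrable_finset_sum _ fun j _ => (hXij i j).const_mul _]
      refine Finset.sum_congr rfl fun i _ => ?_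
      rw [integral_finset_sum _ fun j _ => (hXij i j).const_mul _]
      refine Finset.sum_congr rfl fun j _ => ?_
      calc ∫ a, u i * u j * (X a i * X a j) ∂μ
          = (u i * u j) • ∫ a, X a i * X a j ∂μ := by
            rw [← integral_smul]; simp only [smul_eq_mul]
        _ = u i * u j * Φ i j := by rw [hXΦ]; simp [smul_eq_mul]
    rw [h1]
    simp only [dotProduct, Matrix.mulVec, Finset.mul_sum]
    exact Finset.sum_congr rfl fun i _ => Finset.sum_congr rfl fun j _ => by ring
  have hS2lb : a * U ≤ ∫ ω, S ω ^ 2 ∂μ := by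
    rw [hS2val, ← hUeq]; exact hmin u
  -- a.e. bound f ≤ U - α S²
  have hbound : ∀ᵐ ω ∂μ, f ω ≤ U - α * S ω ^ 2 := by
    filter_upwards [hXbdd] with ω hω
    rw [key ω]
    have hq : (∑ i, X ω i ^ 2) ≤ c ^ 2 := by
      rw [← vnorm_sq]
      exact pow_le_pow_left₀ (Real.sqrt_nonneg _) hω 2
    have h1 : α ^ 2 * S ω ^ 2 * (∑ i, X ω i ^ 2) ≤ α * S ω ^ 2 := by
      have h2 : α ^ 2 * S ω ^ 2 * (∑ i, X ω i ^ 2) ≤ α ^ 2 * S ω ^ 2 * c ^ 2 :=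
        mul_le_mul_of_nonneg_left hq (by positivity)
      have h3 : α * c ^ 2 ≤ 1 := by
        have hc2 : (0:ℝ) < c ^ 2 := by positivity
        calc α * c ^ 2 ≤ (1 / c ^ 2) * c ^ 2 := mul_le_mul_of_nonneg_right hα' hc2.le
          _ = 1 := by field_simp
      calc α ^ 2 * S ω ^ 2 * (∑ i, X ω i ^ 2) ≤ α ^ 2 * S ω ^ 2 * c ^ 2 := h2
        _ = (α * c ^ 2) * (α * S ω ^ 2) := by ring
        _ ≤ 1 * (α * S ω ^ 2) := mul_le_mul_of_nonneg_right h3 (by positivity)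
        _ = α * S ω ^ 2 := one_mul _
    linarith [sq_nonneg (S ω)]
  -- integrability of f
  have hqmeas : Measurable fun ω => ∑ i, X ω i ^ 2 :=
    Finset.measurable_sum _ fun i _ => (hXi i).pow_const 2
  have hfmeas : Measurable f := by
    have heq : f = fun ω => U - 2 * α * S ω ^ 2 + α ^ 2 * S ω ^ 2 * (∑ i, X ω i ^ 2) :=
      funext key
    rw [heq]
    exact (measurable_const.sub ((hSmeas.pow_const 2).const_mul _)).add
      (((hSmeas.pow_const 2).const_mul _).mul hqmeas)
  have hfint : Integrable f μ := by
    refine Integrable.mono' (integrable_const U) hfmeas.aestronglyMeasurable ?_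
    filter_upwards [hbound] with ω hω
    rw [Real.norm_eq_abs, abs_of_nonneg (sq_nonneg _)]
    nlinarith [sq_nonneg (S ω), hα.le]
  -- conclude
  have hgint : Integrable (fun ω => U - α * S ω ^ 2) μ :=
    (integrable_const U).sub (hS2int.const_mul α)
  calc ∫ ω, f ω ∂μ ≤ ∫ ω, (U - α * S ω ^ 2) ∂μ := integral_mono_ae hfint hgint hbound
    _ = U - α * ∫ ω, S ω ^ 2 ∂μ := by
        rw [integral_sub (integrable_const U) (hS2int.const_mul α), integral_const]
        have h4 : ∫ ω, α * S ω ^ 2 ∂μ = α * ∫ ω, S ω ^ 2 ∂μ := by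
          rw [← smul_eq_mul, ← integral_smul]; simp only [smul_eq_mul]
        rw [h4]; simp
    _ ≤ U - α * (a * U) := by
        have := mul_le_mul_of_nonneg_left hS2lb hα.le
        linarith
    _ = (1 - α * a) * vnorm u ^ 2 := by rw [hUeq]; ring
end

section
/- Let Φ be symmetric positive definite, Σ_ε symmetric positive semidefinite, α ∈ (0, 1/‖Φ‖), and Σ^α = α Σ_{k=0}^∞ (I − αΦ)^k Σ_ε (I − αΦ)^k. Then Σ^α satisfies the Riccati equation Φ Σ^α + Σ^α Φ − α Φ Σ^α Φ = Σ_ε. -/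
/-! With `T = 1 - αΦ`, the Riccati expression equals `W - T * W * T` for every `W`, and for
`W = ∑ Tᵏ Σ_ε Tᵏ` shifting the index gives `T * W * T = W - Σ_ε`. The series converges because `T`
is a contraction for the ℓ² operator norm: since `a ≤ Φ ≤ ‖Φ‖ ≤ 1/α`, the quadratic form of `T`
takes values in `[0, (1 - αa)‖x‖²]`, and the norm of a symmetric operator is the supremum of its
Rayleigh quotient. -/

open Matrix

noncomputable def opNorm {d : ℕ} (A : Matrix (Fin d) (Fin d) ℝ) : ℝ :=
  ‖Matrix.toEuclideanCLM (𝕜 := ℝ) A‖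

theorem summable_pow_mul_mul_pow {R : Type*} [NormedRing R] [CompleteSpace R] {T : R}
    (hT : ‖T‖ < 1) (S : R) : Summable fun k : ℕ ↦ T ^ k * S * T ^ k := by
  have hT2 : ‖T‖ ^ 2 < 1 := by nlinarith [norm_nonneg T]
  refine .of_norm_bounded ((summable_geometric_of_lt_one (sq_nonneg ‖T‖) hT2).mul_left ‖S‖)
    fun k ↦ ?_
  rcases Nat.eq_zero_or_pos k with rfl | hk
  · simp
  calc ‖T ^ k * S * T ^ k‖ ≤ ‖T ^ k‖ * ‖S‖ * ‖T ^ k‖ := norm_mul₃_le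
    _ ≤ ‖T‖ ^ k * ‖S‖ * ‖T‖ ^ k := by gcongr <;> exact norm_pow_le' T hk
    _ = ‖S‖ * (‖T‖ ^ 2) ^ k := by ring

theorem tsum_pow_mul_mul_pow_sub_mul_mul {R : Type*} [Ring R] [TopologicalSpace R]
    [IsTopologicalRing R] [T2Space R] {T S : R}
    (hf : Summable fun k : ℕ ↦ T ^ k * S * T ^ k) :
    (∑' k : ℕ, T ^ k * S * T ^ k) - T * (∑' k : ℕ, T ^ k * S * T ^ k) * T = S := by
  have hshift : ∀ k : ℕ, T ^ (k + 1) * S * T ^ (k + 1) = T * (T ^ k * S * T ^ k) * T := by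
    intro k; nth_rw 1 [pow_succ']; rw [pow_succ]; simp only [mul_assoc]
  refine sub_eq_of_eq_add ?_
  nth_rw 1 [hf.tsum_eq_zero_add]
  rw [tsum_congr hshift, (hf.mul_left T).tsum_mul_right, hf.tsum_mul_left]
  simp

theorem riccati_eq_sub_mul_mul {R A : Type*} [CommRing R] [Ring A] [Algebra R A]
    (c : R) (Φ W : A) :
    Φ * (c • W) + (c • W) * Φ - c • (Φ * (c • W) * Φ)
      = W - (1 - c • Φ) * W * (1 - c • Φ) := by
  simp only [mul_sub, sub_mul, one_mul, mul_one, smul_mul_assoc, mul_smul_comm, smul_smul]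
  module

namespace ContinuousLinearMap

variable {𝕜 E : Type*} [RCLike 𝕜] [NormedAddCommGroup E] [InnerProductSpace 𝕜 E]

theorem IsPositive.norm_le_of_forall_re_inner_le {T : E →L[𝕜] E} (hT : T.IsPositive) {c : ℝ}
    (hc : 0 ≤ c) (hle : ∀ x, RCLike.re (inner 𝕜 (T x) x) ≤ c * ‖x‖ ^ 2) :
    ‖T‖ ≤ c := by
  rw [T.norm_eq_iSup_rayleighQuotient hT.isSymmetric]
  refine ciSup_le fun x ↦ ?_
  rcases eq_or_ne x 0 with rfl | hx
  · simpa using hc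
  rw [rayleighQuotient, abs_of_nonneg (div_nonneg (hT.2 x) (by positivity)),
    div_le_iff₀ (by positivity)]
  exact hle x

end ContinuousLinearMap

open scoped RealInnerProductSpace

theorem ContinuousLinearMap.norm_one_sub_smul_le {E : Type*} [NormedAddCommGroup E]
    [InnerProductSpace ℝ E] [Nontrivial E] {P : E →L[ℝ] E} (hP : P.IsSymmetric) {a α : ℝ}
    (ha : ∀ x, a * ‖x‖ ^ 2 ≤ ⟪P x, x⟫) (hα : 0 ≤ α) (hαP : α * ‖P‖ ≤ 1) :
    ‖1 - α • P‖ ≤ 1 - α * a := by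
  have hPx : ∀ x, ⟪P x, x⟫ ≤ ‖P‖ * ‖x‖ ^ 2 := fun x ↦ by
    grw [real_inner_le_norm, le_opNorm, mul_assoc, ← sq]
  have haP : a ≤ ‖P‖ := by
    obtain ⟨x, hx⟩ := exists_ne (0 : E)
    have : 0 < ‖x‖ ^ 2 := by positivity
    nlinarith [ha x, hPx x]
  have hinner : ∀ x, ⟪(1 - α • P) x, x⟫ = ‖x‖ ^ 2 - α * ⟪P x, x⟫ := fun x ↦ by
    simp [inner_sub_left, real_inner_smul_left]
  refine IsPositive.norm_le_of_forall_re_inner_le ⟨?_, fun x ↦ ?_⟩ (by nlinarith) fun x ↦ ?_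
  · intro x y
    simpa [inner_sub_left, inner_sub_right, real_inner_smul_left, real_inner_smul_right]
      using .inl (hP x y)
  · simp only [reApplyInnerSelf_apply, RCLike.re_to_real, hinner]
    nlinarith [mul_le_mul_of_nonneg_right hαP (sq_nonneg ‖x‖),
      mul_le_mul_of_nonneg_left (hPx x) hα]
  · simp only [RCLike.re_to_real, hinner]
    nlinarith [ha x, mul_le_mul_of_nonneg_left (ha x) hα]

theorem vnorm_ofLp {d : ℕ} (x : EuclideanSpace ℝ (Fin d)) : vnorm x.ofLp = ‖x‖ := by
  simp [vnorm, EuclideanSpace.norm_eq]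

theorem Matrix.summable_pow_mul_mul_pow {𝕜 n : Type*} [RCLike 𝕜] [Fintype n] [DecidableEq n]
    {T : Matrix n n 𝕜} (hT : ‖toEuclideanCLM (𝕜 := 𝕜) T‖ < 1) (S : Matrix n n 𝕜) :
    Summable fun k : ℕ ↦ T ^ k * S * T ^ k := by
  open scoped Matrix.Norms.L2Operator in
  exact _root_.summable_pow_mul_mul_pow (T := T) hT S

theorem stmt_4_general {d : ℕ} (a α : ℝ) (ha : 0 < a)
    (Φ Se : Matrix (Fin d) (Fin d) ℝ)
    (hΦpd : Φ.PosDef)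
    (hmin : ∀ u : Fin d → ℝ, a * vnorm u ^ 2 ≤ u ⬝ᵥ Φ.mulVec u)
    (hα : 0 < α) (hα' : α ≤ 1 / opNorm Φ) :
    Φ * (α • ∑' k : ℕ, ((1 : Matrix (Fin d) (Fin d) ℝ) - α • Φ) ^ k * Se
          * ((1 : Matrix (Fin d) (Fin d) ℝ) - α • Φ) ^ k)
      + (α • ∑' k : ℕ, ((1 : Matrix (Fin d) (Fin d) ℝ) - α • Φ) ^ k * Se
          * ((1 : Matrix (Fin d) (Fin d) ℝ) - α • Φ) ^ k) * Φ
      - α • (Φ * (α • ∑' k : ℕ, ((1 : Matrix (Fin d) (Fin d) ℝ) - α • Φ) ^ k * Se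
          * ((1 : Matrix (Fin d) (Fin d) ℝ) - α • Φ) ^ k) * Φ)
      = Se := by
  rcases isEmpty_or_nonempty (Fin d) with _ | _
  · exact Subsingleton.elim _ _
  set P := toEuclideanCLM (𝕜 := ℝ) Φ
  have hP : P.IsSymmetric := (hΦpd.isHermitian.isSelfAdjoint.map toEuclideanCLM).isSymmetric
  have hαP : α * ‖P‖ ≤ 1 := by
    have hP0 : 0 < ‖P‖ := (norm_nonneg P).lt_of_ne fun h ↦ by
      simp [opNorm, P, ← h] at hα'; linarith
    exact (le_div_iff₀ hP0).mp hα'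
  have hcontr : ‖toEuclideanCLM (𝕜 := ℝ) (n := Fin d) (1 - α • Φ)‖ < 1 := calc
    _ = ‖1 - α • P‖ := by simp [P]
    _ ≤ 1 - α * a := P.norm_one_sub_smul_le hP (fun x ↦ by
        simpa [P, vnorm_ofLp, real_inner_comm, inner_toEuclideanCLM] using hmin x.ofLp) hα.le hαP
    _ < 1 := by nlinarith
  rw [riccati_eq_sub_mul_mul]
  exact tsum_pow_mul_mul_pow_sub_mul_mul (summable_pow_mul_mul_pow hcontr Se)

/-- `Σ^α = α Σ_{k≥0} (I−αΦ)^k Σ_ε (I−αΦ)^k` satisfies the Riccati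
equation `ΦΣ^α + Σ^αΦ − αΦΣ^αΦ = Σ_ε`. -/
theorem stmt_4 {d : ℕ} (a α : ℝ) (ha : 0 < a)
    (Φ Se : Matrix (Fin d) (Fin d) ℝ)
    (hΦpd : Φ.PosDef)
    (hmin : ∀ u : Fin d → ℝ, a * vnorm u ^ 2 ≤ u ⬝ᵥ Φ.mulVec u)
    (hSe : Se.PosSemidef)
    (hα : 0 < α) (hα' : α ≤ 1 / opNorm Φ) :
    Φ * (α • ∑' k : ℕ, ((1 : Matrix (Fin d) (Fin d) ℝ) - α • Φ) ^ k * Se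
          * ((1 : Matrix (Fin d) (Fin d) ℝ) - α • Φ) ^ k)
      + (α • ∑' k : ℕ, ((1 : Matrix (Fin d) (Fin d) ℝ) - α • Φ) ^ k * Se
          * ((1 : Matrix (Fin d) (Fin d) ℝ) - α • Φ) ^ k) * Φ
      - α • (Φ * (α • ∑' k : ℕ, ((1 : Matrix (Fin d) (Fin d) ℝ) - α • Φ) ^ k * Se
          * ((1 : Matrix (Fin d) (Fin d) ℝ) - α • Φ) ^ k) * Φ)
      = Se :=
  stmt_4_general a α ha Φ Se hΦpd hmin hα hα'
end

section
/- Under the i.i.d. bounded-features assumption, with α ∈ (0, 1/c²] and the products Γ_{m:k} = Π_{i=m}^{k}(I − αX_iX_iᵀ), it holds for all 1 ≤ m ≤ k and u ∈ ℝ^d that E[‖Γ_{m:k}u‖²]^{1/2} ≤ exp(−αa(k−m+1)/2)‖u‖. -/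
/-!
Each factor `I − α X Xᵀ` with `α ‖X‖² ≤ 1` satisfies
`‖(I − α X Xᵀ) w‖² ≤ ‖w‖² − α (X ⬝ w)²`, so in particular the products `Γ` are contractions.
Applying this with `X = X_{k+1}` and `w = Γ_{m:k} u`, which depends only on `X_0, …, X_k` and is
therefore independent of `X_{k+1}`, gives `E (X_{k+1} ⬝ w)² = E (w ⬝ Φ w) ≥ a E ‖w‖²`, hence
`E ‖Γ_{m:k+1} u‖² ≤ (1 − α a) E ‖Γ_{m:k} u‖² ≤ e^{−α a} E ‖Γ_{m:k} u‖²`.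
Iterate and take square roots.
-/

open MeasureTheory Matrix ProbabilityTheory

/-- The ordered product `Γ_{m:k} = (I − αX_kX_kᵀ)···(I − αX_mX_mᵀ)`, equal to `I` when
`m > k`. -/
noncomputable def prodGamma {d : ℕ} (α : ℝ) (Xs : ℕ → Fin d → ℝ) (m k : ℕ) :
    Matrix (Fin d) (Fin d) ℝ :=
  ((List.range (k + 1 - m)).map (fun j =>
      (1 : Matrix (Fin d) (Fin d) ℝ) - α • vecMulVec (Xs (k - j)) (Xs (k - j)))).prod

section Vnorm

variable {d : ℕ}

lemma vnorm_nonneg (v : Fin d → ℝ) : 0 ≤ vnorm v := Real.sqrt_nonneg _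

lemma vnorm_sq_eq_dotProduct (v : Fin d → ℝ) : vnorm v ^ 2 = v ⬝ᵥ v := by
  rw [vnorm, Real.sq_sqrt (Finset.sum_nonneg fun i _ => sq_nonneg (v i))]
  simp only [dotProduct, sq]

lemma continuous_vnorm : Continuous (vnorm : (Fin d → ℝ) → ℝ) := by
  unfold vnorm; fun_prop

lemma norm_le_vnorm (v : Fin d → ℝ) : ‖v‖ ≤ vnorm v := by
  refine pi_norm_le_iff_of_nonneg (vnorm_nonneg v) |>.2 fun i => ?_
  rw [Real.norm_eq_abs, ← Real.sqrt_sq_eq_abs]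
  exact Real.sqrt_le_sqrt
    (Finset.single_le_sum (f := fun i => v i ^ 2) (fun _ _ => sq_nonneg _) (Finset.mem_univ i))

lemma isCompact_setOf_vnorm_le (C : ℝ) : IsCompact {v : Fin d → ℝ | vnorm v ≤ C} :=
  Metric.isCompact_of_isClosed_isBounded (isClosed_le continuous_vnorm continuous_const)
    ((Metric.isBounded_closedBall (x := 0) (r := C)).subset fun v hv => by
      simpa using (norm_le_vnorm v).trans hv)

end Vnorm

section Contraction

variable {d : ℕ}

lemma one_sub_smul_vecMulVec_mulVec (α : ℝ) (x w : Fin d → ℝ) :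
    (1 - α • vecMulVec x x) *ᵥ w = w - (α * (x ⬝ᵥ w)) • x := by
  rw [sub_mulVec, one_mulVec, smul_mulVec, vecMulVec_mulVec, op_smul_eq_smul, smul_smul]

lemma vnorm_sq_one_sub_smul_vecMulVec_mulVec_le {α : ℝ} (hα : 0 ≤ α) {x : Fin d → ℝ}
    (hx : α * vnorm x ^ 2 ≤ 1) (w : Fin d → ℝ) :
    vnorm ((1 - α • vecMulVec x x) *ᵥ w) ^ 2 ≤ vnorm w ^ 2 - α * (x ⬝ᵥ w) ^ 2 := by
  have hexpand : vnorm ((1 - α • vecMulVec x x) *ᵥ w) ^ 2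
      = vnorm w ^ 2 - 2 * α * (x ⬝ᵥ w) ^ 2 + α * (x ⬝ᵥ w) ^ 2 * (α * vnorm x ^ 2) := by
    simp only [vnorm_sq_eq_dotProduct, one_sub_smul_vecMulVec_mulVec, sub_dotProduct,
      dotProduct_sub, smul_dotProduct, dotProduct_smul, smul_eq_mul, dotProduct_comm w x]
    ring
  rw [hexpand]
  nlinarith [mul_nonneg hα (sq_nonneg (x ⬝ᵥ w))]

lemma vnorm_one_sub_smul_vecMulVec_mulVec_le {α : ℝ} (hα : 0 ≤ α) {x : Fin d → ℝ}
    (hx : α * vnorm x ^ 2 ≤ 1) (w : Fin d → ℝ) :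
    vnorm ((1 - α • vecMulVec x x) *ᵥ w) ≤ vnorm w := by
  refine (pow_le_pow_iff_left₀ (vnorm_nonneg _) (vnorm_nonneg w) two_ne_zero).1 ?_
  nlinarith [vnorm_sq_one_sub_smul_vecMulVec_mulVec_le hα hx w, mul_nonneg hα (sq_nonneg (x ⬝ᵥ w))]

lemma vnorm_list_prod_mulVec_le {l : List (Matrix (Fin d) (Fin d) ℝ)}
    (hl : ∀ A ∈ l, ∀ w, vnorm (A *ᵥ w) ≤ vnorm w) (w : Fin d → ℝ) :
    vnorm (l.prod *ᵥ w) ≤ vnorm w := by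
  induction l generalizing w with
  | nil => simp
  | cons A l ih =>
    rw [List.prod_cons, ← mulVec_mulVec]
    exact (hl A (by simp) _).trans (ih (fun B hB => hl B (by simp [hB])) w)

lemma vnorm_prodGamma_mulVec_le {α : ℝ} (hα : 0 ≤ α) {Xs : ℕ → Fin d → ℝ}
    (hXs : ∀ t, α * vnorm (Xs t) ^ 2 ≤ 1) (m k : ℕ) (u : Fin d → ℝ) :
    vnorm (prodGamma α Xs m k *ᵥ u) ≤ vnorm u :=
  vnorm_list_prod_mulVec_le
    (by simpa using fun _ _ => vnorm_one_sub_smul_vecMulVec_mulVec_le hα (hXs _)) u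

end Contraction

section ProdGamma

variable {d : ℕ} (α : ℝ) (Xs : ℕ → Fin d → ℝ)

lemma prodGamma_succ_self (k : ℕ) : prodGamma α Xs (k + 1) k = 1 := by
  simp [prodGamma]

lemma prodGamma_succ {m k : ℕ} (h : m ≤ k + 1) :
    prodGamma α Xs m (k + 1)
      = (1 - α • vecMulVec (Xs (k + 1)) (Xs (k + 1))) * prodGamma α Xs m k := by
  rw [prodGamma, show k + 1 + 1 - m = k + 1 - m + 1 by omega, List.range_succ_eq_map,
    List.map_cons, List.prod_cons, List.map_map]
  simp only [prodGamma, Function.comp_def, Nat.sub_zero, Nat.succ_sub_succ]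

lemma prodGamma_comp_min (m k : ℕ) :
    prodGamma α (fun t => Xs (min t k)) m k = prodGamma α Xs m k := by
  simp [prodGamma]

lemma continuous_prodGamma (m k : ℕ) :
    Continuous fun Xs : ℕ → Fin d → ℝ => prodGamma α Xs m k :=
  continuous_list_prod _ fun j _ => by fun_prop

end ProdGamma

lemma measurable_prodGamma_mulVec {d : ℕ} (α : ℝ) {Ω : Type*} {mΩ : MeasurableSpace Ω}
    {X : ℕ → Ω → Fin d → ℝ} {k : ℕ} (hX : ∀ t ≤ k, Measurable (X t)) (m : ℕ)
    (u : Fin d → ℝ) :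
    Measurable fun ω => prodGamma α (fun t => X t ω) m k *ᵥ u := by
  have hcont : Continuous fun Xs : ℕ → Fin d → ℝ => prodGamma α Xs m k *ᵥ u :=
    (continuous_prodGamma α m k).matrix_mulVec continuous_const
  -- `Γ_{m:k}` only reads `X 0, …, X k`, so measurability of the truncated process suffices
  have htrunc : Measurable fun ω t => X (min t k) ω :=
    measurable_pi_lambda _ fun t => hX _ (min_le_right t k)
  convert hcont.measurable.comp htrunc using 2 with ω
  exact congrArg (· *ᵥ u) (prodGamma_comp_min α (fun t => X t ω) m k).symm

lemma ProbabilityTheory.iIndepFun.indepFun_of_measurable_iSup {Ω ι β γ : Type*}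
    {mΩ : MeasurableSpace Ω} {μ : Measure Ω} [MeasurableSpace β] [MeasurableSpace γ]
    {X : ι → Ω → β} (hX : iIndepFun X μ) (hXmeas : ∀ t, Measurable (X t)) {T : Set ι}
    {N : ι} (hN : N ∉ T) {V : Ω → γ}
    (hV : Measurable[⨆ t ∈ T, MeasurableSpace.comap (X t) inferInstance] V) :
    IndepFun (X N) V μ := by
  rw [IndepFun_iff_Indep]
  have h := indep_iSup_of_disjoint (fun t => (hXmeas t).comap_le) hX.iIndep
    (S := {N}) (T := T) (Set.disjoint_singleton_left.2 hN)
  refine indep_of_indep_of_le_right (indep_of_indep_of_le_left h ?_) hV.comap_le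
  exact le_iSup₂ (f := fun t (_ : t ∈ ({N} : Set ι)) => MeasurableSpace.comap (X t) _) N rfl

lemma integral_sum_sum {Ω ι κ : Type*} {mΩ : MeasurableSpace Ω} {μ : Measure Ω}
    (s : Finset ι) (t : Finset κ) {F : ι → κ → Ω → ℝ} (hF : ∀ i j, Integrable (F i j) μ) :
    ∫ ω, ∑ i ∈ s, ∑ j ∈ t, F i j ω ∂μ = ∑ i ∈ s, ∑ j ∈ t, ∫ ω, F i j ω ∂μ := by
  rw [integral_finsetSum _ fun i _ => integrable_finsetSum _ fun j _ => hF i j]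
  exact Finset.sum_congr rfl fun i _ => integral_finsetSum _ fun j _ => hF i j

section Integrals

variable {Ω : Type*} {mΩ : MeasurableSpace Ω} {μ : Measure Ω} [IsFiniteMeasure μ] {d : ℕ}

lemma integrable_comp_of_ae_mem_isCompact {E : Type*} [TopologicalSpace E] [MeasurableSpace E]
    [OpensMeasurableSpace E] {K : Set E} (hK : IsCompact K) {f : E → ℝ} (hf : Continuous f)
    {V : Ω → E} (hV : Measurable V) (hVK : ∀ᵐ ω ∂μ, V ω ∈ K) :
    Integrable (fun ω => f (V ω)) μ := by
  obtain ⟨M, hM⟩ := hK.exists_bound_of_continuousOn hf.continuousOn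
  exact .of_bound (hf.measurable.comp hV).aestronglyMeasurable M (hVK.mono fun ω hω => hM _ hω)

lemma integral_dotProduct_sq_of_indepFun {Y V : Ω → Fin d → ℝ} (hY : Measurable Y)
    (hV : Measurable V) (hYV : IndepFun Y V μ) {c C : ℝ} (hYc : ∀ᵐ ω ∂μ, vnorm (Y ω) ≤ c)
    (hVC : ∀ᵐ ω ∂μ, vnorm (V ω) ≤ C) {Φ : Matrix (Fin d) (Fin d) ℝ}
    (hYΦ : ∀ i j, ∫ ω, Y ω i * Y ω j ∂μ = Φ i j) :
    ∫ ω, (Y ω ⬝ᵥ V ω) ^ 2 ∂μ = ∫ ω, V ω ⬝ᵥ Φ *ᵥ V ω ∂μ := by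
  have hYY : ∀ i j, Integrable (fun ω => Y ω i * Y ω j) μ := fun i j =>
    integrable_comp_of_ae_mem_isCompact (isCompact_setOf_vnorm_le c)
      (f := fun y => y i * y j) (by fun_prop) hY hYc
  have hVV : ∀ i j, Integrable (fun ω => V ω i * V ω j) μ := fun i j =>
    integrable_comp_of_ae_mem_isCompact (isCompact_setOf_vnorm_le C)
      (f := fun v => v i * v j) (by fun_prop) hV hVC
  have hindep : ∀ i j, IndepFun (fun ω => Y ω i * Y ω j) (fun ω => V ω i * V ω j) μ :=
    fun i j => hYV.comp (φ := fun y : Fin d → ℝ => y i * y j)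
      (ψ := fun v : Fin d → ℝ => v i * v j) (by fun_prop) (by fun_prop)
  calc ∫ ω, (Y ω ⬝ᵥ V ω) ^ 2 ∂μ
      = ∫ ω, ∑ i, ∑ j, (Y ω i * Y ω j) * (V ω i * V ω j) ∂μ := by
        congr 1 with ω
        rw [sq, dotProduct, Finset.sum_mul_sum]
        exact Finset.sum_congr rfl fun i _ => Finset.sum_congr rfl fun j _ => by ring
    _ = ∑ i, ∑ j, Φ i j * ∫ ω, V ω i * V ω j ∂μ := by
        rw [integral_sum_sum (F := fun i j ω => (Y ω i * Y ω j) * (V ω i * V ω j)) _ _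
          fun i j => (hindep i j).integrable_mul (hYY i j) (hVV i j)]
        refine Finset.sum_congr rfl fun i _ => Finset.sum_congr rfl fun j _ => ?_
        rw [(hindep i j).integral_fun_mul_eq_mul_integral (hYY i j).1 (hVV i j).1, hYΦ]
    _ = ∫ ω, ∑ i, ∑ j, Φ i j * (V ω i * V ω j) ∂μ := by
        rw [integral_sum_sum _ _ fun i j => (hVV i j).const_mul (Φ i j)]
        simp only [integral_const_mul]
    _ = ∫ ω, V ω ⬝ᵥ Φ *ᵥ V ω ∂μ := by
        congr 1 with ω
        simp only [dotProduct, mulVec, Finset.mul_sum]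
        exact Finset.sum_congr rfl fun i _ => Finset.sum_congr rfl fun j _ => by ring

lemma integral_vnorm_sq_one_sub_smul_vecMulVec_mulVec_le {Y V : Ω → Fin d → ℝ}
    (hY : Measurable Y) (hV : Measurable V) (hYV : IndepFun Y V μ) {α c C : ℝ} (hα : 0 ≤ α)
    (hαc : α * c ^ 2 ≤ 1) (hYc : ∀ᵐ ω ∂μ, vnorm (Y ω) ≤ c) (hVC : ∀ᵐ ω ∂μ, vnorm (V ω) ≤ C)
    {Φ : Matrix (Fin d) (Fin d) ℝ} (hYΦ : ∀ i j, ∫ ω, Y ω i * Y ω j ∂μ = Φ i j) {a : ℝ}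
    (hmin : ∀ v : Fin d → ℝ, a * vnorm v ^ 2 ≤ v ⬝ᵥ Φ *ᵥ v) :
    ∫ ω, vnorm ((1 - α • vecMulVec (Y ω) (Y ω)) *ᵥ V ω) ^ 2 ∂μ
      ≤ (1 - α * a) * ∫ ω, vnorm (V ω) ^ 2 ∂μ := by
  have hVsq : Integrable (fun ω => vnorm (V ω) ^ 2) μ :=
    integrable_comp_of_ae_mem_isCompact (isCompact_setOf_vnorm_le C)
      (continuous_vnorm.pow 2) hV hVC
  have hYVsq : Integrable (fun ω => (Y ω ⬝ᵥ V ω) ^ 2) μ :=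
    integrable_comp_of_ae_mem_isCompact
      ((isCompact_setOf_vnorm_le c).prod (isCompact_setOf_vnorm_le C))
      (f := fun p => (p.1 ⬝ᵥ p.2) ^ 2) (by fun_prop) (hY.prodMk hV) (hYc.and hVC)
  have hVΦV : Integrable (fun ω => V ω ⬝ᵥ Φ *ᵥ V ω) μ :=
    integrable_comp_of_ae_mem_isCompact (isCompact_setOf_vnorm_le C)
      (f := fun v => v ⬝ᵥ Φ *ᵥ v) (by fun_prop) hV hVC
  have hpointwise : ∀ᵐ ω ∂μ, vnorm ((1 - α • vecMulVec (Y ω) (Y ω)) *ᵥ V ω) ^ 2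
      ≤ vnorm (V ω) ^ 2 - α * (Y ω ⬝ᵥ V ω) ^ 2 := hYc.mono fun ω hω => by
    refine vnorm_sq_one_sub_smul_vecMulVec_mulVec_le hα ?_ _
    nlinarith [pow_le_pow_left₀ (vnorm_nonneg (Y ω)) hω 2]
  calc ∫ ω, vnorm ((1 - α • vecMulVec (Y ω) (Y ω)) *ᵥ V ω) ^ 2 ∂μ
      ≤ ∫ ω, (vnorm (V ω) ^ 2 - α * (Y ω ⬝ᵥ V ω) ^ 2) ∂μ :=
        integral_mono_of_nonneg (.of_forall fun _ => sq_nonneg _)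
          (hVsq.sub (hYVsq.const_mul α)) hpointwise
    _ = ∫ ω, vnorm (V ω) ^ 2 ∂μ - α * ∫ ω, V ω ⬝ᵥ Φ *ᵥ V ω ∂μ := by
        rw [integral_sub hVsq (hYVsq.const_mul α), integral_const_mul,
          integral_dotProduct_sq_of_indepFun hY hV hYV hYc hVC hYΦ]
    _ ≤ ∫ ω, vnorm (V ω) ^ 2 ∂μ - α * (a * ∫ ω, vnorm (V ω) ^ 2 ∂μ) := by
        have hlower : a * ∫ ω, vnorm (V ω) ^ 2 ∂μ ≤ ∫ ω, V ω ⬝ᵥ Φ *ᵥ V ω ∂μ := by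
          rw [← integral_const_mul]
          exact integral_mono (hVsq.const_mul a) hVΦV fun ω => hmin (V ω)
        gcongr
    _ = (1 - α * a) * ∫ ω, vnorm (V ω) ^ 2 ∂μ := by ring

end Integrals

lemma integral_vnorm_sq_prodGamma_mulVec_le {Ω : Type*} [MeasurableSpace Ω] {μ : Measure Ω}
    [IsProbabilityMeasure μ] {d : ℕ} {X : ℕ → Ω → Fin d → ℝ} (hXmeas : ∀ t, Measurable (X t))
    (hindep : iIndepFun X μ) {α c a : ℝ} (hα : 0 ≤ α) (hαc : α * c ^ 2 ≤ 1)
    (hXc : ∀ t, ∀ᵐ ω ∂μ, vnorm (X t ω) ≤ c) {Φ : Matrix (Fin d) (Fin d) ℝ}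
    (hXΦ : ∀ t i j, ∫ ω, X t ω i * X t ω j ∂μ = Φ i j)
    (hmin : ∀ v : Fin d → ℝ, a * vnorm v ^ 2 ≤ v ⬝ᵥ Φ *ᵥ v) (m : ℕ) (u : Fin d → ℝ) :
    ∀ k ≥ m, ∫ ω, vnorm (prodGamma α (fun t => X t ω) (m + 1) k *ᵥ u) ^ 2 ∂μ
      ≤ Real.exp (-(α * a * (k - m : ℕ))) * vnorm u ^ 2 := by
  have hΓu : ∀ k, ∀ᵐ ω ∂μ, vnorm (prodGamma α (fun t => X t ω) (m + 1) k *ᵥ u) ≤ vnorm u :=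
    fun k => (ae_all_iff.2 hXc).mono fun ω hω => vnorm_prodGamma_mulVec_le hα
      (fun t => by nlinarith [pow_le_pow_left₀ (vnorm_nonneg (X t ω)) (hω t) 2]) _ _ u
  refine Nat.le_induction (by simp [prodGamma_succ_self]) fun k hk ih => ?_
  have hpast : Measurable[⨆ t ∈ Set.Iio (k + 1), MeasurableSpace.comap (X t) inferInstance]
      fun ω => prodGamma α (fun t => X t ω) (m + 1) k *ᵥ u :=
    measurable_prodGamma_mulVec α (fun t ht => Measurable.of_comap_le
      (le_iSup₂ (f := fun t (_ : t ∈ Set.Iio (k + 1)) => MeasurableSpace.comap (X t) _) t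
        (Nat.lt_succ_of_le ht))) _ u
  have hstep := integral_vnorm_sq_one_sub_smul_vecMulVec_mulVec_le (hXmeas (k + 1))
    (measurable_prodGamma_mulVec α (fun t _ => hXmeas t) _ u)
    (hindep.indepFun_of_measurable_iSup hXmeas Set.self_notMem_Iio hpast) hα hαc
    (hXc (k + 1)) (hΓu k) (hXΦ (k + 1)) hmin
  calc ∫ ω, vnorm (prodGamma α (fun t => X t ω) (m + 1) (k + 1) *ᵥ u) ^ 2 ∂μ
      = ∫ ω, vnorm ((1 - α • vecMulVec (X (k + 1) ω) (X (k + 1) ω)) *ᵥ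
          (prodGamma α (fun t => X t ω) (m + 1) k *ᵥ u)) ^ 2 ∂μ := by
        simp only [prodGamma_succ _ _ (Nat.succ_le_succ hk), mulVec_mulVec]
    _ ≤ (1 - α * a) * ∫ ω, vnorm (prodGamma α (fun t => X t ω) (m + 1) k *ᵥ u) ^ 2 ∂μ := hstep
    _ ≤ Real.exp (-(α * a)) * (Real.exp (-(α * a * (k - m : ℕ))) * vnorm u ^ 2) :=
        mul_le_mul (by linarith [Real.add_one_le_exp (-(α * a))]) ih
          (integral_nonneg fun _ => sq_nonneg _) (Real.exp_nonneg _)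
    _ = Real.exp (-(α * a * (k + 1 - m : ℕ))) * vnorm u ^ 2 := by
        rw [← mul_assoc, ← Real.exp_add, Nat.sub_add_comm hk]
        push_cast
        ring_nf

theorem stmt_10_general {d : ℕ} (c a α : ℝ) (hc : 0 < c)
    (hα : 0 < α) (hα' : α ≤ 1 / c ^ 2)
    (Φ : Matrix (Fin d) (Fin d) ℝ)
    (hmin : ∀ u : Fin d → ℝ, a * vnorm u ^ 2 ≤ u ⬝ᵥ Φ.mulVec u)
    {Ω : Type*} [MeasurableSpace Ω] (μ : Measure Ω) [IsProbabilityMeasure μ]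
    (X : ℕ → Ω → Fin d → ℝ) (hXmeas : ∀ k, Measurable (X k))
    (hindep : iIndepFun X μ)
    (hident : ∀ k, IdentDistrib (X k) (X 1) μ μ)
    (hXbdd : ∀ k, ∀ᵐ ω ∂μ, vnorm (X k ω) ≤ c)
    (hXΦ : ∀ i j, ∫ ω, X 1 ω i * X 1 ω j ∂μ = Φ i j) :
    ∀ m k : ℕ, 1 ≤ m → m ≤ k → ∀ u : Fin d → ℝ,
      Real.sqrt (∫ ω, vnorm ((prodGamma α (fun i => X i ω) m k).mulVec u) ^ 2 ∂μ)
        ≤ Real.exp (-(α * a * (k - m + 1 : ℕ)) / 2) * vnorm u := by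
  intro m k hm hk u
  obtain ⟨m, rfl⟩ := Nat.exists_eq_add_of_le' hm
  have hαc : α * c ^ 2 ≤ 1 := by rwa [le_div_iff₀ (pow_pos hc 2)] at hα'
  have hXtΦ : ∀ t i j, ∫ ω, X t ω i * X t ω j ∂μ = Φ i j := fun t i j =>
    ((hident t).comp (u := fun x : Fin d → ℝ => x i * x j) (by fun_prop)).integral_eq.trans
      (hXΦ i j)
  have hdecay := integral_vnorm_sq_prodGamma_mulVec_le hXmeas hindep hα.le hαc hXbdd hXtΦ hmin
    m u k (by omega)
  rw [show k - (m + 1) + 1 = k - m by omega]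
  calc Real.sqrt (∫ ω, vnorm (prodGamma α (fun t => X t ω) (m + 1) k *ᵥ u) ^ 2 ∂μ)
      ≤ Real.sqrt (Real.exp (-(α * a * (k - m : ℕ))) * vnorm u ^ 2) := Real.sqrt_le_sqrt hdecay
    _ = Real.exp (-(α * a * (k - m : ℕ)) / 2) * vnorm u := by
        rw [Real.sqrt_mul (Real.exp_nonneg _), Real.sqrt_sq (vnorm_nonneg u), Real.exp_half]

/-- **Statement 9.** For i.i.d. `X_k` with `‖X_k‖ ≤ c` a.s. and `E[X₁X₁ᵀ] = Φ` positive
definite with `λ_min(Φ) = a > 0`, and `0 < α ≤ 1/c²`, we have for `1 ≤ m ≤ k`: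
`E[‖Γ_{m:k}u‖²]^{1/2} ≤ exp(−αa(k−m+1)/2)‖u‖`. -/
theorem stmt_10 {d : ℕ} (c a α : ℝ) (hc : 0 < c) (ha : 0 < a)
    (hα : 0 < α) (hα' : α ≤ 1 / c ^ 2)
    (Φ : Matrix (Fin d) (Fin d) ℝ) (hΦpd : Φ.PosDef)
    (hmin : ∀ u : Fin d → ℝ, a * vnorm u ^ 2 ≤ u ⬝ᵥ Φ.mulVec u)
    {Ω : Type*} [MeasurableSpace Ω] (μ : Measure Ω) [IsProbabilityMeasure μ]
    (X : ℕ → Ω → Fin d → ℝ) (hXmeas : ∀ k, Measurable (X k))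
    (hindep : iIndepFun X μ)
    (hident : ∀ k, IdentDistrib (X k) (X 1) μ μ)
    (hXbdd : ∀ k, ∀ᵐ ω ∂μ, vnorm (X k ω) ≤ c)
    (hXΦ : ∀ i j, ∫ ω, X 1 ω i * X 1 ω j ∂μ = Φ i j) :
    ∀ m k : ℕ, 1 ≤ m → m ≤ k → ∀ u : Fin d → ℝ,
      Real.sqrt (∫ ω, vnorm ((prodGamma α (fun i => X i ω) m k).mulVec u) ^ 2 ∂μ)
        ≤ Real.exp (-(α * a * (k - m + 1 : ℕ)) / 2) * vnorm u :=
  stmt_10_general c a α hc hα hα' Φ hmin μ X hXmeas hindep hident hXbdd hXΦ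
end

section
/- Let Φ be symmetric positive definite with λ_min(Φ) = a > 0 and Σ the unique solution of ΦΣ + ΣΦ = Σ_ε with Σ_ε positive semidefinite, α ∈ (0, 1/‖Φ‖). Then the difference Σ^α − Σ (with Σ^α = α Σ_{k≥0}(I−αΦ)^kΣ_ε(I−αΦ)^k) admits the representation Σ^α − Σ = α² Σ_{k=0}^∞ (I − αΦ)^k ΦΣΦ (I − αΦ)^k. -/
/-!
With `B = 1 - αΦ`, the Rayleigh quotients of `B` lie in `[0, 1 - αa]` (the lower end because
`α‖Φ‖ ≤ 1`), so `‖B‖ < 1` in the `L²` operator norm. For such `B` the Stein equation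
`X = S - B S B` is solved by the convergent series `S = ∑ Bᵏ X Bᵏ`, as the series telescopes.
Expanding `S - B S B = α (ΦS + SΦ) - α² ΦSΦ = α Σ_ε - α² ΦSΦ` and summing gives the claim.
-/

open Matrix

open scoped RealInnerProductSpace

section SteinEquation

variable {R : Type*} [NormedRing R] [CompleteSpace R] {B : R}

theorem summable_pow_mul_mul_pow_s19 (hB : ‖B‖ < 1) (X : R) :
    Summable fun k : ℕ => B ^ k * X * B ^ k := by
  have hB2 : ‖B‖ ^ 2 < 1 := pow_lt_one₀ (norm_nonneg B) hB two_ne_zero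
  refine (summable_nat_add_iff 1).mp <| .of_norm_bounded
    ((summable_geometric_of_lt_one (by positivity) hB2).mul_left (‖B‖ ^ 2 * ‖X‖)) fun k => ?_
  have hBk : ‖B ^ (k + 1)‖ ≤ ‖B‖ ^ (k + 1) := norm_pow_le' B k.succ_pos
  calc ‖B ^ (k + 1) * X * B ^ (k + 1)‖
      ≤ ‖B ^ (k + 1)‖ * ‖X‖ * ‖B ^ (k + 1)‖ := norm_mul₃_le
    _ ≤ ‖B‖ ^ (k + 1) * ‖X‖ * ‖B‖ ^ (k + 1) := by gcongr
    _ = ‖B‖ ^ 2 * ‖X‖ * (‖B‖ ^ 2) ^ k := by ring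

theorem hasSum_pow_mul_sub_mul_pow (hB : ‖B‖ < 1) (S : R) :
    HasSum (fun k : ℕ => B ^ k * (S - B * S * B) * B ^ k) S := by
  set f : ℕ → R := fun k => B ^ k * S * B ^ k
  have hf : HasSum f (∑' k, f k) := (summable_pow_mul_mul_pow_s19 hB S).hasSum
  have hshift : HasSum (fun k => f (k + 1)) (∑' k, f k - f 0) := by
    simpa using (hasSum_nat_add_iff' 1).mpr hf
  have htelescope : ∀ k, B ^ k * (S - B * S * B) * B ^ k = f k - f (k + 1) := fun k => by
    simp only [f]
    nth_rw 1 [pow_succ]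
    rw [pow_succ']
    simp only [mul_sub, sub_mul, mul_assoc]
  simpa only [htelescope, f, pow_zero, one_mul, mul_one, sub_sub_cancel] using hf.sub hshift

end SteinEquation

theorem self_sub_one_sub_smul_mul_mul_one_sub_smul {A : Type*} [Ring A] [Algebra ℝ A]
    (α : ℝ) (Φ S : A) :
    S - (1 - α • Φ) * S * (1 - α • Φ) = α • (Φ * S + S * Φ) - α ^ 2 • (Φ * S * Φ) := by
  simp only [sub_mul, mul_sub, one_mul, mul_one, smul_mul_assoc, mul_smul_comm, smul_add]
  module

theorem smul_tsum_sub_eq_sq_smul_tsum {A : Type*} [NormedRing A] [NormedAlgebra ℝ A]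
    [CompleteSpace A] {α : ℝ} {Φ : A} (hB : ‖1 - α • Φ‖ < 1) (S : A) :
    α • ∑' k : ℕ, (1 - α • Φ) ^ k * (Φ * S + S * Φ) * (1 - α • Φ) ^ k - S
      = α ^ 2 • ∑' k : ℕ, (1 - α • Φ) ^ k * (Φ * S * Φ) * (1 - α • Φ) ^ k := by
  have hu := summable_pow_mul_mul_pow_s19 hB (Φ * S + S * Φ)
  have hv := summable_pow_mul_mul_pow_s19 hB (Φ * S * Φ)
  have hS := hasSum_pow_mul_sub_mul_pow hB S
  rw [self_sub_one_sub_smul_mul_mul_one_sub_smul] at hS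
  simp only [mul_sub, sub_mul, mul_smul_comm, smul_mul_assoc] at hS
  have h := (hS.add (hv.const_smul (α ^ 2)).hasSum).tsum_eq
  simp only [sub_add_cancel, hu.tsum_const_smul, hv.tsum_const_smul] at h
  rw [h, add_sub_cancel_left]

theorem ContinuousLinearMap.norm_one_sub_smul_lt_one {E : Type*} [NormedAddCommGroup E]
    [InnerProductSpace ℝ E] [CompleteSpace E] {T : E →L[ℝ] E} (hT : IsSelfAdjoint T)
    {a α : ℝ} (ha : 0 < a) (hα : 0 < α) (hαT : α * ‖T‖ ≤ 1)
    (hmin : ∀ x, a * ‖x‖ ^ 2 ≤ ⟪T x, x⟫) : ‖1 - α • T‖ < 1 := by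
  have hB : IsSelfAdjoint (1 - α • T) :=
    (IsSelfAdjoint.one _).sub ((IsSelfAdjoint.all α).smul hT)
  suffices ‖1 - α • T‖ ≤ max (1 - α * a) 0 from
    this.trans_lt (max_lt (sub_lt_self 1 (mul_pos hα ha)) one_pos)
  rw [norm_eq_iSup_rayleighQuotient _ hB.isSymmetric]
  refine ciSup_le fun x => ?_
  have hupper : ⟪T x, x⟫ ≤ ‖T‖ * ‖x‖ ^ 2 :=
    calc ⟪T x, x⟫ ≤ ‖T x‖ * ‖x‖ := real_inner_le_norm _ _
      _ ≤ ‖T‖ * ‖x‖ * ‖x‖ := by gcongr; exact T.le_opNorm x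
      _ = ‖T‖ * ‖x‖ ^ 2 := by ring
  have hquad : ⟪(1 - α • T) x, x⟫ = ‖x‖ ^ 2 - α * ⟪T x, x⟫ := by
    simp [inner_sub_left, real_inner_smul_left]
  have hnonneg : 0 ≤ ⟪(1 - α • T) x, x⟫ := by
    rw [hquad, sub_nonneg]
    calc α * ⟪T x, x⟫ ≤ α * ‖T‖ * ‖x‖ ^ 2 := by rw [mul_assoc]; gcongr
      _ ≤ ‖x‖ ^ 2 := mul_le_of_le_one_left (sq_nonneg _) hαT
  simp only [rayleighQuotient, reApplyInnerSelf_apply, RCLike.re_to_real]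
  rw [abs_of_nonneg (div_nonneg hnonneg (sq_nonneg _))]
  refine div_le_of_le_mul₀ (sq_nonneg _) (le_max_right _ _) ?_
  calc ⟪(1 - α • T) x, x⟫ ≤ (1 - α * a) * ‖x‖ ^ 2 := by rw [hquad]; nlinarith [hmin x]
    _ ≤ max (1 - α * a) 0 * ‖x‖ ^ 2 := by gcongr; exact le_max_left _ _

theorem vnorm_eq_norm_toLp {d : ℕ} (v : Fin d → ℝ) : vnorm v = ‖WithLp.toLp 2 v‖ := by
  simp [vnorm, EuclideanSpace.norm_eq]

open scoped Matrix.Norms.L2Operator in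
theorem Matrix.l2_opNorm_one_sub_smul_lt_one {d : ℕ} {Φ : Matrix (Fin d) (Fin d) ℝ}
    (hΦ : Φ.IsHermitian) {a α : ℝ} (ha : 0 < a) (hα : 0 < α) (hα' : α ≤ 1 / opNorm Φ)
    (hmin : ∀ u : Fin d → ℝ, a * vnorm u ^ 2 ≤ u ⬝ᵥ Φ *ᵥ u) : ‖1 - α • Φ‖ < 1 := by
  have hαT : α * opNorm Φ ≤ 1 := by
    rcases (norm_nonneg (toEuclideanCLM (𝕜 := ℝ) Φ)).eq_or_lt with h | h
    · simp [opNorm, ← h]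
    · exact (le_div_iff₀ h).mp hα'
  have hminT : ∀ x, a * ‖x‖ ^ 2 ≤ ⟪toEuclideanCLM (𝕜 := ℝ) (n := Fin d) Φ x, x⟫ := fun x => by
    rw [real_inner_comm, inner_toEuclideanCLM]
    simpa only [vnorm_eq_norm_toLp, WithLp.toLp_ofLp] using hmin x.ofLp
  rw [cstar_norm_def, map_sub, map_one, map_smul]
  exact ContinuousLinearMap.norm_one_sub_smul_lt_one (hΦ.isSelfAdjoint.map _) ha hα hαT hminT

theorem stmt_19_general {d : ℕ} (a α : ℝ) (ha : 0 < a)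
    (Φ Se S : Matrix (Fin d) (Fin d) ℝ)
    (hΦpd : Φ.PosDef)
    (hmin : ∀ u : Fin d → ℝ, a * vnorm u ^ 2 ≤ u ⬝ᵥ Φ.mulVec u)
    (hα : 0 < α) (hα' : α ≤ 1 / opNorm Φ)
    (hLyap : Φ * S + S * Φ = Se) :
    (α • ∑' k : ℕ, ((1 : Matrix (Fin d) (Fin d) ℝ) - α • Φ) ^ k * Se
        * ((1 : Matrix (Fin d) (Fin d) ℝ) - α • Φ) ^ k) - S
      = α ^ 2 • ∑' k : ℕ, ((1 : Matrix (Fin d) (Fin d) ℝ) - α • Φ) ^ k * (Φ * S * Φ)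
          * ((1 : Matrix (Fin d) (Fin d) ℝ) - α • Φ) ^ k := by
  open scoped Matrix.Norms.L2Operator in
  rw [← hLyap]
  exact smul_tsum_sub_eq_sq_smul_tsum
    (Matrix.l2_opNorm_one_sub_smul_lt_one hΦpd.isHermitian ha hα hα' hmin) S

/-- If `Σ` is the unique solution of `ΦΣ + ΣΦ = Σ_ε` and
`Σ^α = α Σ_{k≥0} (I−αΦ)^k Σ_ε (I−αΦ)^k`, then
`Σ^α − Σ = α² Σ_{k≥0} (I−αΦ)^k ΦΣΦ (I−αΦ)^k`. -/
theorem stmt_19 {d : ℕ} (a α : ℝ) (ha : 0 < a)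
    (Φ Se S : Matrix (Fin d) (Fin d) ℝ)
    (hΦpd : Φ.PosDef)
    (hmin : ∀ u : Fin d → ℝ, a * vnorm u ^ 2 ≤ u ⬝ᵥ Φ.mulVec u)
    (hSe : Se.PosSemidef)
    (hα : 0 < α) (hα' : α ≤ 1 / opNorm Φ)
    (hLyap : Φ * S + S * Φ = Se) :
    (α • ∑' k : ℕ, ((1 : Matrix (Fin d) (Fin d) ℝ) - α • Φ) ^ k * Se
        * ((1 : Matrix (Fin d) (Fin d) ℝ) - α • Φ) ^ k) - S
      = α ^ 2 • ∑' k : ℕ, ((1 : Matrix (Fin d) (Fin d) ℝ) - α • Φ) ^ k * (Φ * S * Φ)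
          * ((1 : Matrix (Fin d) (Fin d) ℝ) - α • Φ) ^ k :=
  stmt_19_general a α ha Φ Se S hΦpd hmin hα hα' hLyap
end
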